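/- arXiv:1001.0322 — 5 statements merged into one kernel-verified Lean document; each statement's English description precedes it below -/
import Mathlib

section
/- In the formal power series ring ℂ⟦z,w⟧ in two variables (i.e. MvPowerSeries (Fin 2) ℂ with z = X 0 and w = X 1), for every k ≥ 1 and every p with 0 ≤ p ≤ k−1, the element w^p · z^{k−1−p} does NOT belong to the ideal generated by z + w and w^k. -/
/-!
Restrict to the line `z = -w`, i.e. substitute `z ↦ -w`, `w ↦ w` into `R⟦w⟧`. This kills `z + w`
and sends `w ^ k` to `w ^ k`, so the ideal `(z + w, w ^ k)` lands in `(w ^ k)`; but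
`w ^ p * z ^ (k - 1 - p)` goes to `±w ^ (k - 1)`, whose coefficient of degree `k - 1` is a unit.
-/

namespace MvPowerSeries

lemma hasSubst_neg_X_X (R : Type*) [CommRing R] :
    HasSubst ![-PowerSeries.X, (PowerSeries.X : PowerSeries R)] :=
  hasSubst_of_constantCoeff_zero fun i => by
    fin_cases i <;> simp <;> exact PowerSeries.constantCoeff_X

noncomputable def antidiagonalRestriction (R : Type*) [CommRing R] :
    MvPowerSeries (Fin 2) R →ₐ[R] PowerSeries R :=
  substAlgHom (hasSubst_neg_X_X R)

variable {R : Type*} [CommRing R]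

@[simp]
lemma antidiagonalRestriction_X_zero : antidiagonalRestriction R (X 0) = -PowerSeries.X := by
  rw [antidiagonalRestriction, substAlgHom_X]
  rfl

@[simp]
lemma antidiagonalRestriction_X_one : antidiagonalRestriction R (X 1) = PowerSeries.X := by
  rw [antidiagonalRestriction, substAlgHom_X]
  rfl

lemma span_add_X_pow_le_comap_antidiagonalRestriction (k : ℕ) :
    Ideal.span {X 0 + X 1, X 1 ^ k} ≤
      (Ideal.span {PowerSeries.X ^ k}).comap (antidiagonalRestriction R) := by
  rw [Ideal.span_le, Set.insert_subset_iff, Set.singleton_subset_iff]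
  simp

lemma antidiagonalRestriction_X_one_pow_mul_X_zero_pow (p q : ℕ) :
    antidiagonalRestriction R (X 1 ^ p * X 0 ^ q) =
      (-1 : PowerSeries R) ^ q * PowerSeries.X ^ (p + q) := by
  rw [map_mul, map_pow, map_pow, antidiagonalRestriction_X_zero, antidiagonalRestriction_X_one,
    neg_pow, mul_left_comm, ← pow_add]

theorem X_one_pow_mul_X_zero_pow_notMem_span [Nontrivial R] {k p : ℕ} (hpk : p < k) :
    (X 1 : MvPowerSeries (Fin 2) R) ^ p * X 0 ^ (k - 1 - p) ∉ Ideal.span {X 0 + X 1, X 1 ^ k} := by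
  intro h
  have hdvd := Ideal.mem_span_singleton.mp (span_add_X_pow_le_comap_antidiagonalRestriction k h)
  rw [antidiagonalRestriction_X_one_pow_mul_X_zero_pow,
    Nat.add_sub_cancel' (Nat.le_sub_one_of_lt hpk), PowerSeries.X_pow_dvd_iff] at hdvd
  exact (isUnit_neg_one.pow (k - 1 - p)).ne_zero <| by
    simpa [PowerSeries.coeff_mul_X_pow'] using hdvd (k - 1) (by omega)

end MvPowerSeries

/-- Optimality example: in `ℂ⟦z,w⟧` (with `z = X 0`, `w = X 1`), for `k ≥ 1` and
`0 ≤ p ≤ k-1`, the element `w^p z^{k-1-p}` does not belong to the ideal `(z + w, w^k)`. -/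
theorem pow_mul_pow_not_mem_span_add_pow (k p : ℕ) (hk : 1 ≤ k) (hp : p ≤ k - 1) :
    (MvPowerSeries.X 1 : MvPowerSeries (Fin 2) ℂ) ^ p *
        (MvPowerSeries.X 0 : MvPowerSeries (Fin 2) ℂ) ^ (k - 1 - p) ∉
      Ideal.span
        {(MvPowerSeries.X 0 : MvPowerSeries (Fin 2) ℂ) + MvPowerSeries.X 1,
          (MvPowerSeries.X 1 : MvPowerSeries (Fin 2) ℂ) ^ k} :=
  MvPowerSeries.X_one_pow_mul_X_zero_pow_notMem_span (by omega)
end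

section
/- For every k ≥ 1 and every p with 0 ≤ p ≤ k−1, there do not exist a neighborhood V of 0 in ℂ × ℂ and complex-analytic functions g, h on V such that w^p · z^{k−1−p} = (z + w) · g(z,w) + w^k · h(z,w) for all (z,w) ∈ V. -/
/-! On the antidiagonal `z = -w` the term `(z + w) g` vanishes and the identity becomes
`(-1)^m w^(k-1) = w^k h(-w, w)` with `m = k - 1 - p`. Hence `w h(-w, w) = (-1)^m` for small
`w ≠ 0`, which is impossible since the left side tends to `0` as `w → 0` by continuity of `h`. -/

open Filter Topology

theorem not_eventually_mul_eq_const {𝕜 : Type*} [NontriviallyNormedField 𝕜] {f : 𝕜 → 𝕜}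
    (hf : ContinuousAt f 0) {c : 𝕜} (hc : c ≠ 0) : ¬ ∀ᶠ w in 𝓝[≠] 0, w * f w = c := by
  intro hev
  have hzero : Tendsto (fun w => w * f w) (𝓝[≠] 0) (𝓝 0) := by
    simpa using (tendsto_id.mul hf.tendsto).mono_left nhdsWithin_le_nhds
  exact hc (tendsto_nhds_unique ((tendsto_congr' hev).mpr tendsto_const_nhds) hzero)

theorem mul_eq_neg_one_pow_of_pow_mul_neg_pow_eq {R : Type*} [CommRing R] [IsDomain R]
    {w a : R} {p m : ℕ} (hw : w ≠ 0) (h : w ^ p * (-w) ^ m = w ^ (p + m + 1) * a) :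
    w * a = (-1) ^ m := by
  refine (mul_left_cancel₀ (pow_ne_zero (p + m) hw) ?_).symm
  calc w ^ (p + m) * (-1) ^ m = w ^ p * (-w) ^ m := by rw [neg_pow, pow_add]; ring
    _ = w ^ (p + m + 1) * a := h
    _ = w ^ (p + m) * (w * a) := by ring

/-- Analytic-germ formulation of the optimality example: for `k ≥ 1` and `0 ≤ p ≤ k-1`,
there is no neighborhood `V` of `0 ∈ ℂ²` and analytic functions `g, h` on `V` with
`w^p z^{k-1-p} = (z+w) g(z,w) + w^k h(z,w)` on `V`. -/
theorem not_exists_analytic_decomposition (k p : ℕ) (hk : 1 ≤ k) (hp : p ≤ k - 1) :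
    ¬ ∃ V ∈ nhds (0 : ℂ × ℂ), ∃ g h : ℂ × ℂ → ℂ,
        AnalyticOnNhd ℂ g V ∧ AnalyticOnNhd ℂ h V ∧
        ∀ q ∈ V, q.2 ^ p * q.1 ^ (k - 1 - p) =
          (q.1 + q.2) * g q + q.2 ^ k * h q := by
  rintro ⟨V, hV, g, h, -, hh, heq⟩
  set m := k - 1 - p
  have hkpm : k = p + m + 1 := by omega
  have hanti : ContinuousAt (fun w : ℂ => ((-w, w) : ℂ × ℂ)) 0 := by fun_prop
  have hanti0 : ((-0, 0) : ℂ × ℂ) = 0 := by simp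
  have hmem : ∀ᶠ w in 𝓝[≠] (0 : ℂ), ((-w, w) : ℂ × ℂ) ∈ V :=
    nhdsWithin_le_nhds (hanti.preimage_mem_nhds (hanti0 ▸ hV))
  refine not_eventually_mul_eq_const (f := fun w => h (-w, w))
    ((hh 0 (mem_of_mem_nhds hV)).continuousAt.comp_of_eq hanti hanti0)
    (pow_ne_zero m (neg_ne_zero.mpr one_ne_zero)) ?_
  filter_upwards [hmem, self_mem_nhdsWithin] with w hwV hw0
  refine mul_eq_neg_one_pow_of_pow_mul_neg_pow_eq (p := p) hw0 ?_
  simpa [hkpm] using heq _ hwV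
end

section
/- Let A be a commutative ring that is a ℚ-algebra, let B = A⟦X⟧ be the formal power series ring with formal derivative d, let 𝔞 ⊆ B be an ideal, and let k ≥ 1, l ≥ 1. Suppose φ ∈ B satisfies d^j φ ∈ 𝔞^{k+l−1−j} + (X) for every j with 0 ≤ j ≤ k−1 (where d^j denotes the j-fold iterate of the derivative and (X) is the ideal generated by X). Then φ ∈ Σ_{i=0}^{k−1} X^i · 𝔞^{k+l−1−i} + (X^k); in particular φ ∈ 𝔞^l + (X^k). -/
/-!
Modulo `X`, the `n`-th derivative of `f` is `n! • C (coeff n f)`, so over a `ℚ`-algebra the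
hypothesis says `C (coeff j φ) ∈ 𝔞 ^ (N - j) + (X)` with `N = k + l - 1`. Since a derivation lowers
`𝔞`-adic order by at most one, the `p`-th coefficient of an element of `X ^ i * 𝔞 ^ (N - i)`,
`i ≤ p`, satisfies the same bound. Hence if `φ = s + X ^ p * ψ` with `s ∈ Σ_{i<p} X ^ i 𝔞 ^ (N - i)`,
comparing `p`-th coefficients gives `ψ ∈ 𝔞 ^ (N - p) + (X)`, i.e. one more term of the sum.
-/

open PowerSeries Ideal

namespace Derivation

variable {R S : Type*} [CommSemiring R] [CommSemiring S] [Algebra R S] (D : Derivation R S S)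
  {I : Ideal S}

theorem apply_mem_pow_sub_one_of_mem_pow {r : ℕ} {a : S} (ha : a ∈ I ^ r) :
    D a ∈ I ^ (r - 1) := by
  induction r generalizing a with
  | zero => simp
  | succ r ih =>
    rw [pow_succ'] at ha
    refine Submodule.mul_induction_on ha (fun x hx y hy => ?_) fun x y hx hy => ?_
    · rw [D.leibniz, smul_eq_mul, smul_eq_mul, Nat.add_sub_cancel]
      have hxDy : x * D y ∈ I ^ (r - 1 + 1) := pow_succ' I _ ▸ mul_mem_mul hx (ih hy)
      exact add_mem (Ideal.pow_le_pow_right (by omega) hxDy) (mul_mem_right _ _ hy)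
    · rw [map_add]
      exact add_mem hx hy

theorem iterate_apply_mem_pow_sub_of_mem_pow {r : ℕ} {a : S} (ha : a ∈ I ^ r) (n : ℕ) :
    D^[n] a ∈ I ^ (r - n) := by
  induction n with
  | zero => simpa using ha
  | succ n ih =>
    rw [Function.iterate_succ_apply', ← Nat.sub_sub]
    exact D.apply_mem_pow_sub_one_of_mem_pow ih

end Derivation

namespace PowerSeries

variable {A : Type*} [CommRing A] {𝔞 : Ideal A⟦X⟧}

theorem mem_sup_span_X_iff_C_constantCoeff_mem {I : Ideal A⟦X⟧} {f : A⟦X⟧} :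
    f ∈ I ⊔ span {X} ↔ C (constantCoeff f) ∈ I ⊔ span {X} := by
  have h : f - C (constantCoeff f) ∈ I ⊔ span {X} :=
    mem_sup_right (mem_span_singleton.2 (X_dvd_iff.2 (by simp)))
  exact ⟨fun hf => by simpa using sub_mem hf h, fun hC => by simpa using add_mem h hC⟩

theorem span_X_pow_mul_sup_span_X (I : Ideal A⟦X⟧) (p : ℕ) :
    span {X ^ p} * (I ⊔ span {X}) = span {X ^ p} * I ⊔ span {(X : A⟦X⟧) ^ (p + 1)} := by
  rw [Ideal.mul_sup, span_singleton_mul_span_singleton, pow_succ]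

variable [Algebra ℚ A]

theorem iterate_derivative_mem_sup_span_X_iff_C_coeff_mem {I : Ideal A⟦X⟧} (n : ℕ)
    (f : A⟦X⟧) :
    (d⁄dX A)^[n] f ∈ I ⊔ span {X} ↔ C (coeff n f) ∈ I ⊔ span {X} := by
  have hunit : IsUnit (n.factorial : A⟦X⟧) := by
    simpa using (IsUnit.mk0 (n.factorial : ℚ) (by positivity)).map (algebraMap ℚ A⟦X⟧)
  rw [mem_sup_span_X_iff_C_constantCoeff_mem, constantCoeff_iterate_derivative, map_mul,
    map_natCast, unit_mul_mem_iff_mem _ hunit]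

theorem C_coeff_mem_pow_sub_sup_span_X {r : ℕ} {a : A⟦X⟧} (ha : a ∈ 𝔞 ^ r) (m : ℕ) :
    C (coeff m a) ∈ 𝔞 ^ (r - m) ⊔ span {X} :=
  (iterate_derivative_mem_sup_span_X_iff_C_coeff_mem m a).1
    (mem_sup_left ((d⁄dX A).iterate_apply_mem_pow_sub_of_mem_pow ha m))

theorem C_coeff_mem_of_mem_iSup_span_X_pow_mul {N p : ℕ} {s : A⟦X⟧}
    (hs : s ∈ ⨆ i ∈ Finset.range p, span {X ^ i} * 𝔞 ^ (N - i)) :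
    C (coeff p s) ∈ 𝔞 ^ (N - p) ⊔ span {X} := by
  obtain ⟨μ, rfl⟩ := (Submodule.mem_iSup_finset_iff_exists_sum _ s).1 hs
  rw [map_sum, map_sum]
  refine sum_mem fun i hi => ?_
  obtain ⟨a, ha, hμ⟩ := mem_span_singleton_mul.1 (μ i).2
  have hip : i ≤ p := (Finset.mem_range.1 hi).le
  rw [← hμ, coeff_X_pow_mul', if_pos hip]
  simpa [Nat.sub_sub_sub_cancel_right hip] using C_coeff_mem_pow_sub_sup_span_X ha (p - i)

theorem mem_iSup_span_X_pow_mul_pow_sup_of_C_coeff_mem {N p : ℕ} {φ : A⟦X⟧}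
    (h : ∀ j < p, C (coeff j φ) ∈ 𝔞 ^ (N - j) ⊔ span {X}) :
    φ ∈ (⨆ i ∈ Finset.range p, span {X ^ i} * 𝔞 ^ (N - i)) ⊔ span {X ^ p} := by
  induction p with
  | zero => simp
  | succ p ih =>
    obtain ⟨s, hs, t, ht, rfl⟩ := Submodule.mem_sup.1 (ih fun j hj => h j (by omega))
    obtain ⟨ψ, rfl⟩ := mem_span_singleton.1 ht
    have hψ : ψ ∈ 𝔞 ^ (N - p) ⊔ span {X} := by
      have hcoeff := h p (lt_add_one p)
      rw [map_add, coeff_X_pow_mul', if_pos le_rfl, Nat.sub_self,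
        coeff_zero_eq_constantCoeff_apply, map_add] at hcoeff
      rw [Submodule.add_mem_iff_right _ (C_coeff_mem_of_mem_iSup_span_X_pow_mul hs)] at hcoeff
      exact mem_sup_span_X_iff_C_constantCoeff_mem.2 hcoeff
    have hXψ := mul_mem_mul (mem_span_singleton_self (X ^ p)) hψ
    rw [span_X_pow_mul_sup_span_X] at hXψ
    rw [Finset.range_add_one, Finset.iSup_insert]
    have hle : span {X ^ p} * 𝔞 ^ (N - p) ⊔ span {X ^ (p + 1)} ≤
        (span {X ^ p} * 𝔞 ^ (N - p) ⊔ ⨆ i ∈ Finset.range p, span {X ^ i} * 𝔞 ^ (N - i)) ⊔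
          span {X ^ (p + 1)} :=
      sup_le_sup_right le_sup_left _
    exact add_mem (mem_sup_left (mem_sup_right hs)) (hle hXψ)

end PowerSeries

theorem powerSeries_membership_from_derivative_bounds_general
    (A : Type*) [CommRing A] [Algebra ℚ A] (𝔞 : Ideal (PowerSeries A))
    (k l : ℕ) (φ : PowerSeries A)
    (hder : ∀ j ≤ k - 1,
      (fun ψ : PowerSeries A => PowerSeries.derivative A ψ)^[j] φ ∈
        𝔞 ^ (k + l - 1 - j) + Ideal.span {(PowerSeries.X : PowerSeries A)}) :
    φ ∈ (⨆ i ∈ Finset.range k,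
          Ideal.span {(PowerSeries.X : PowerSeries A) ^ i} * 𝔞 ^ (k + l - 1 - i)) +
        Ideal.span {(PowerSeries.X : PowerSeries A) ^ k} ∧
      φ ∈ 𝔞 ^ l + Ideal.span {(PowerSeries.X : PowerSeries A) ^ k} := by
  have hmem := mem_iSup_span_X_pow_mul_pow_sup_of_C_coeff_mem (N := k + l - 1) (p := k)
    fun j hj => (iterate_derivative_mem_sup_span_X_iff_C_coeff_mem j φ).1 (hder j (by omega))
  refine ⟨hmem, ?_⟩
  have hle : (⨆ i ∈ Finset.range k, span {X ^ i} * 𝔞 ^ (k + l - 1 - i)) ≤ 𝔞 ^ l :=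
    iSup₂_le fun i hi =>
      mul_le_right.trans (Ideal.pow_le_pow_right (by have := Finset.mem_range.1 hi; omega))
  exact sup_le_sup_right hle _ hmem

/-- Membership statement from the paper's proof of the Briançon–Skoda theorem for
`O/(X^k)`: if `d^j φ ∈ 𝔞^{k+l-1-j} + (X)` for `0 ≤ j ≤ k-1`, where `d` is the formal
derivative on `A⟦X⟧`, then `φ ∈ Σ_{i<k} X^i 𝔞^{k+l-1-i} + (X^k)`; in particular
`φ ∈ 𝔞^l + (X^k)`. -/
theorem powerSeries_membership_from_derivative_bounds
    (A : Type*) [CommRing A] [Algebra ℚ A] (𝔞 : Ideal (PowerSeries A))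
    (k l : ℕ) (hk : 1 ≤ k) (hl : 1 ≤ l) (φ : PowerSeries A)
    (hder : ∀ j ≤ k - 1,
      (fun ψ : PowerSeries A => PowerSeries.derivative A ψ)^[j] φ ∈
        𝔞 ^ (k + l - 1 - j) + Ideal.span {(PowerSeries.X : PowerSeries A)}) :
    φ ∈ (⨆ i ∈ Finset.range k,
          Ideal.span {(PowerSeries.X : PowerSeries A) ^ i} * 𝔞 ^ (k + l - 1 - i)) +
        Ideal.span {(PowerSeries.X : PowerSeries A) ^ k} ∧
      φ ∈ 𝔞 ^ l + Ideal.span {(PowerSeries.X : PowerSeries A) ^ k} :=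
  powerSeries_membership_from_derivative_bounds_general A 𝔞 k l φ hder
end

section
/- Let R₀ be a commutative ring, R a commutative R₀-algebra, Ω an R-module, and D : R → Ω an R₀-linear derivation. Fix l ≥ 1, m ≥ 1, let F be the free R-module with basis e(i,j) indexed by (i,j) ∈ Fin l × Fin m, and let Λ be the exterior algebra over R of the module M = Ω × F, with canonical inclusion ι : M → Λ. Let a₀, a'₁, …, a'_m ∈ R and set a_j = a₀ · a'_j. Define, for each i ∈ Fin l, the elements u_i = Σ_{j=1}^m a_j • ι(0, e(i,j)) (of degree 1) and v_i = Σ_{j=1}^m ι(D a_j, 0) · ι(0, e(i,j)) (of degree 2) of Λ. Then for every β : Fin l → ℕ there exists ξ ∈ Λ such that (Π_{i=1}^{l} u_i) · (Π_{i=1}^{l} v_i^{β_i}) = a₀^{l + Σ_i β_i} • ξ. -/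
/-!
Write `u i = a₀ • ι (μ i)` with `μ i = ∑ j, a' j • e(i,j)`. By the Leibniz rule
`D (a₀ a'ⱼ) = a₀ • D a'ⱼ + a'ⱼ • D a₀`, so `v i = a₀ • B i + ι (D a₀, 0) * ι (μ i)` with `B i`
of degree two. Products of two degree-one elements are central, and
`ι (μ i) * (ι (D a₀, 0) * ι (μ i)) = 0` because `ι (μ i) ^ 2 = 0`; hence
`ι (μ i) * v i ^ k = a₀ ^ k • (ι (μ i) * B i ^ k)`. Moving each `v i ^ β i` next to `u i`, every
pair contributes a factor `a₀ ^ (1 + β i)`.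
-/

theorem List.prod_ofFn_smul {R M : Type*} [CommMonoid R] [Monoid M] [MulAction R M]
    [IsScalarTower R M M] [SMulCommClass R M M] {n : ℕ} (c : Fin n → R) (x : Fin n → M) :
    (List.ofFn fun i => c i • x i).prod = (∏ i, c i) • (List.ofFn x).prod := by
  induction n with
  | zero => simp
  | succ n ih =>
    simp only [List.ofFn_succ, List.prod_cons, Fin.prod_univ_succ, ih, smul_mul_smul_comm]

theorem List.prod_ofFn_mul_prod_ofFn_of_commute {M : Type*} [Monoid M] {n : ℕ}
    (f g : Fin n → M) (h : ∀ i j, Commute (f i) (g j)) :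
    (List.ofFn f).prod * (List.ofFn g).prod = (List.ofFn fun i => f i * g i).prod := by
  induction n with
  | zero => simp
  | succ n ih =>
    have hg : Commute (g 0) (List.ofFn fun i => f i.succ).prod :=
      Commute.list_prod_right _ _ fun x hx => by
        obtain ⟨i, rfl⟩ := List.mem_ofFn.mp hx
        exact (h _ _).symm
    simp only [List.ofFn_succ, List.prod_cons]
    rw [← ih _ _ fun i j => h _ _, mul_assoc, ← mul_assoc _ (g 0), ← hg.eq]
    simp only [mul_assoc]

section Algebra

variable {R S : Type*} [CommSemiring R] [Semiring S] [Algebra R S]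

theorem mul_smul_add_pow_of_mul_eq_zero {A B C : S} (r : R) (hAC : A * C = 0)
    (hBC : Commute B C) (n : ℕ) : A * (r • B + C) ^ n = r ^ n • (A * B ^ n) := by
  induction n with
  | zero => simp
  | succ n ih =>
    have hABC : A * B ^ n * C = 0 := by
      rw [mul_assoc, (hBC.pow_left n).eq, ← mul_assoc, hAC, zero_mul]
    rw [pow_succ, ← mul_assoc, ih, smul_mul_assoc, mul_add, mul_smul_comm, hABC, add_zero,
      smul_smul, ← pow_succ, mul_assoc, ← pow_succ]

theorem prod_ofFn_smul_mul_prod_ofFn_smul_add_pow {n : ℕ} (r : R) (A B C : Fin n → S)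
    (hB : ∀ i t, Commute (B i) t) (hC : ∀ i t, Commute (C i) t) (hAC : ∀ i, A i * C i = 0)
    (β : Fin n → ℕ) :
    (List.ofFn fun i => r • A i).prod * (List.ofFn fun i => (r • B i + C i) ^ β i).prod =
      r ^ (n + ∑ i, β i) • (List.ofFn fun i => A i * B i ^ β i).prod := by
  have hcentral : ∀ i t, Commute ((r • B i + C i) ^ β i) t := fun i t =>
    (((hB i t).smul_left r).add_left (hC i t)).pow_left _
  rw [List.prod_ofFn_mul_prod_ofFn_of_commute _ _ fun i j => (hcentral j _).symm]
  simp only [smul_mul_assoc, mul_smul_add_pow_of_mul_eq_zero r (hAC _) (hB _ _), smul_smul,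
    ← pow_succ', List.prod_ofFn_smul, Finset.prod_pow_eq_pow_sum, Finset.sum_add_distrib]
  simp [add_comm]

end Algebra

namespace ExteriorAlgebra

variable {R M : Type*} [CommRing R] [AddCommGroup M] [Module R M]

theorem commute_ι_mul_ι (x y : M) (t : ExteriorAlgebra R M) :
    Commute (ι R x * ι R y) t := by
  have anticomm : ∀ x y : M, ι R x * ι R y = -(ι R y * ι R x) := fun x y =>
    eq_neg_of_add_eq_zero_left (ι_add_mul_swap x y)
  induction t using ExteriorAlgebra.induction with
  | algebraMap r => exact (Algebra.commutes r _).symm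
  | ι z =>
    change _ * _ * _ = _ * (_ * _)
    rw [mul_assoc, anticomm y z, mul_neg, ← mul_assoc, anticomm x z, neg_mul, neg_neg,
      mul_assoc]
  | mul a b ha hb => exact ha.mul_right hb
  | add a b ha hb => exact ha.add_right hb

theorem ι_mul_ι_mul_ι_self (x y : M) : ι R x * (ι R y * ι R x) = 0 := by
  rw [← (commute_ι_mul_ι y x (ι R x)).eq, mul_assoc, ι_sq_zero, mul_zero]

theorem sum_ι_derivation_mul_mul_ι {R₀ Ω N κ : Type*} [CommRing R₀] [Algebra R₀ R]
    [AddCommGroup Ω] [Module R Ω] [Module R₀ Ω] [AddCommGroup N] [Module R N] [Fintype κ]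
    (D : Derivation R₀ R Ω) (a₀ : R) (a' : κ → R) (y : κ → Ω × N) :
    ∑ j, ι R (D (a₀ * a' j), (0 : N)) * ι R (y j) =
      a₀ • ∑ j, ι R (D (a' j), (0 : N)) * ι R (y j) +
        ι R (D a₀, (0 : N)) * ι R (∑ j, a' j • y j) := by
  have leibniz : ∀ j, ((D (a₀ * a' j), (0 : N)) : Ω × N) =
      a₀ • (D (a' j), 0) + a' j • (D a₀, 0) := fun j => by
    rw [Derivation.leibniz]; simp
  simp only [leibniz, map_add, map_smul, add_mul, smul_mul_assoc, Finset.sum_add_distrib,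
    Finset.smul_sum, map_sum, Finset.mul_sum, mul_smul_comm]

end ExteriorAlgebra

open ExteriorAlgebra in
theorem exteriorAlgebra_principalization_divisibility_general
    (R₀ R : Type*) [CommRing R₀] [CommRing R] [Algebra R₀ R]
    (Ω : Type*) [AddCommGroup Ω] [Module R Ω] [Module R₀ Ω]
    (D : Derivation R₀ R Ω) (l m : ℕ)
    (a₀ : R) (a' : Fin m → R) (a : Fin m → R) (ha : ∀ j, a j = a₀ * a' j)
    (u v : Fin l → ExteriorAlgebra R (Ω × (Fin l × Fin m → R)))
    (hu : ∀ i, u i = ∑ j : Fin m,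
      a j • ExteriorAlgebra.ι R ((0 : Ω), Pi.single (i, j) (1 : R)))
    (hv : ∀ i, v i = ∑ j : Fin m,
      ExteriorAlgebra.ι R (D (a j), (0 : Fin l × Fin m → R)) *
        ExteriorAlgebra.ι R ((0 : Ω), Pi.single (i, j) (1 : R)))
    (β : Fin l → ℕ) :
    ∃ ξ : ExteriorAlgebra R (Ω × (Fin l × Fin m → R)),
      (List.ofFn u).prod * (List.ofFn fun i => v i ^ β i).prod =
        a₀ ^ (l + ∑ i, β i) • ξ := by
  let e : Fin l → Fin m → Ω × (Fin l × Fin m → R) := fun i j => (0, Pi.single (i, j) 1)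
  let μ : Fin l → Ω × (Fin l × Fin m → R) := fun i => ∑ j, a' j • e i j
  obtain rfl : u = fun i => a₀ • ι R (μ i) := funext fun i => by
    simp only [hu, ha, mul_smul, ← Finset.smul_sum, μ, map_sum, map_smul, e]
  obtain rfl : v = fun i => a₀ • (∑ j, ι R (D (a' j), 0) * ι R (e i j)) +
      ι R (D a₀, 0) * ι R (μ i) := funext fun i => by
    simp only [hv, ha]
    exact sum_ι_derivation_mul_mul_ι D a₀ a' (e i)
  exact ⟨_, prod_ofFn_smul_mul_prod_ofFn_smul_add_pow a₀ _ _ _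
    (fun i t => Commute.sum_left _ _ _ fun j _ => commute_ι_mul_ι _ _ t)
    (fun i t => commute_ι_mul_ι _ _ t) (fun i => ι_mul_ι_mul_ι_self _ _) β⟩

/-- Algebraic core of Lemma 4.1: after a principalization `a_j = a₀ · a'_j`, the exterior
product `(⋀_i u_i) ∧ (⋀_i v_i^{β_i})`, where `u_i = Σ_j a_j • ι(0, e(i,j))` and
`v_i = Σ_j ι(D a_j, 0) · ι(0, e(i,j))`, is divisible by `a₀^{l + Σ_i β_i}`. -/
theorem exteriorAlgebra_principalization_divisibility
    (R₀ R : Type*) [CommRing R₀] [CommRing R] [Algebra R₀ R]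
    (Ω : Type*) [AddCommGroup Ω] [Module R Ω] [Module R₀ Ω]
    (D : Derivation R₀ R Ω) (l m : ℕ) (hl : 1 ≤ l) (hm : 1 ≤ m)
    (a₀ : R) (a' : Fin m → R) (a : Fin m → R) (ha : ∀ j, a j = a₀ * a' j)
    (u v : Fin l → ExteriorAlgebra R (Ω × (Fin l × Fin m → R)))
    (hu : ∀ i, u i = ∑ j : Fin m,
      a j • ExteriorAlgebra.ι R ((0 : Ω), Pi.single (i, j) (1 : R)))
    (hv : ∀ i, v i = ∑ j : Fin m,
      ExteriorAlgebra.ι R (D (a j), (0 : Fin l × Fin m → R)) *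
        ExteriorAlgebra.ι R ((0 : Ω), Pi.single (i, j) (1 : R)))
    (β : Fin l → ℕ) :
    ∃ ξ : ExteriorAlgebra R (Ω × (Fin l × Fin m → R)),
      (List.ofFn u).prod * (List.ofFn fun i => v i ^ β i).prod =
        a₀ ^ (l + ∑ i, β i) • ξ :=
  exteriorAlgebra_principalization_divisibility_general R₀ R Ω D l m a₀ a' a ha u v hu hv β
end

section
/- Let n ≥ 1, k ≥ 1, let U be an open neighborhood of 0 in (Fin (n−1) → ℂ) × ℂ (points written (z,w)), and let φ be a complex-analytic function on U. Suppose there is a neighborhood U' of 0 in ℂ^{n−1} such that for every j with 0 ≤ j ≤ k−1 and every z ∈ U' (with (z,0) ∈ U), the j-th derivative in w of φ at w = 0 vanishes: (d/dw)^j φ(z,0) = 0. Then there exist a neighborhood V of 0 in (Fin (n−1) → ℂ) × ℂ and a complex-analytic function h on V such that φ(z,w) = w^k · h(z,w) for all (z,w) ∈ V. -/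
/-!
Write `v = (z, w)` and `πv = (z, 0)`. Every homogeneous term `P` of the power series of `f` at
`(z₀, 0)` telescopes as `P(v,…,v) − P(πv,…,πv) = w • Q(v,…,v)`, because `v − πv = w • (0, 1)`,
and `‖Q‖ ≤ (m + 1) ‖P‖`, so the series `∑ Q` still converges near `0`. If `f` vanishes on
`{w = 0}`, the terms `P(πv,…,πv)` sum to `0`, hence `f = w • g` with `g` analytic. Since
`∂_w^{j+1} (w • g) = (j + 1) • ∂_w^j g` at `w = 0`, the quotient `g` inherits the vanishing of the
transversal derivatives of one order less, and induction on `k` produces the factor `w ^ k`.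
-/

open Filter Topology

variable {𝕜 E F : Type*} [NontriviallyNormedField 𝕜] [NormedAddCommGroup E] [NormedSpace 𝕜 E]
  [NormedAddCommGroup F] [NormedSpace 𝕜 F]

variable (𝕜 E) in
noncomputable def zeroSnd : E × 𝕜 →L[𝕜] E × 𝕜 := (ContinuousLinearMap.id 𝕜 E).prodMap 0

@[simp] lemma zeroSnd_apply (v : E × 𝕜) : zeroSnd 𝕜 E v = (v.1, 0) := rfl

lemma norm_zeroSnd_le : ‖zeroSnd 𝕜 E‖ ≤ 1 :=
  ContinuousLinearMap.opNorm_le_bound _ zero_le_one fun v => by simp [Prod.norm_def]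

namespace ContinuousMultilinearMap

variable {m : ℕ}

/-- The `i`-th telescoping term `P(v,…,v, v − πv, πv,…,πv)` (difference in slot `i`) equals
`v.2 • P.divSndTerm i (v,…,v)`. -/
noncomputable def divSndTerm (P : ContinuousMultilinearMap 𝕜 (fun _ : Fin (m + 1) => E × 𝕜) F)
    (i : Fin (m + 1)) : ContinuousMultilinearMap 𝕜 (fun _ : Fin m => E × 𝕜) F :=
  (P.curryMid i (0, 1)).compContinuousLinearMap fun t =>
    if t.castSucc < i then ContinuousLinearMap.id 𝕜 (E × 𝕜) else zeroSnd 𝕜 E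

noncomputable def divSnd (P : ContinuousMultilinearMap 𝕜 (fun _ : Fin (m + 1) => E × 𝕜) F) :
    ContinuousMultilinearMap 𝕜 (fun _ : Fin m => E × 𝕜) F :=
  ∑ i, P.divSndTerm i

lemma norm_divSndTerm_le (P : ContinuousMultilinearMap 𝕜 (fun _ : Fin (m + 1) => E × 𝕜) F)
    (i : Fin (m + 1)) : ‖P.divSndTerm i‖ ≤ ‖P‖ := by
  refine (norm_compContinuousLinearMap_le _ _).trans ?_
  refine (mul_le_of_le_one_right (norm_nonneg _) ?_).trans ?_
  · refine Finset.prod_le_one (fun _ _ => norm_nonneg _) fun t _ => ?_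
    split_ifs
    exacts [ContinuousLinearMap.norm_id_le, norm_zeroSnd_le]
  · refine ((P.curryMid i).le_opNorm _).trans ?_
    simp [Prod.norm_def]

lemma norm_divSnd_le (P : ContinuousMultilinearMap 𝕜 (fun _ : Fin (m + 1) => E × 𝕜) F) :
    ‖P.divSnd‖ ≤ (m + 1) * ‖P‖ := by
  refine (norm_sum_le _ _).trans ?_
  simpa using Finset.sum_le_sum fun i (_ : i ∈ Finset.univ) => P.norm_divSndTerm_le i

lemma map_sub_map_zeroSnd (P : ContinuousMultilinearMap 𝕜 (fun _ : Fin (m + 1) => E × 𝕜) F)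
    (v : E × 𝕜) :
    P (fun _ => v) - P (fun _ => zeroSnd 𝕜 E v) = v.2 • P.divSnd (fun _ => v) := by
  have htelescope := P.toMultilinearMap.map_sub_map_piecewise (fun _ => v)
    (fun _ => zeroSnd 𝕜 E v) Finset.univ
  simp only [Finset.piecewise_univ, Finset.mem_univ, true_implies, coe_coe] at htelescope
  rw [htelescope, divSnd, sum_apply, Finset.smul_sum]
  refine Finset.sum_congr rfl fun i _ => ?_
  rw [divSndTerm, compContinuousLinearMap_apply, curryMid_apply, ← coe_coe,
    ← MultilinearMap.map_insertNth_smul]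
  congr 1
  ext j : 1
  cases j using Fin.succAboveCases i with
  | x => simp [Prod.ext_iff]
  | p t =>
    simp only [Fin.insertNth_apply_succAbove, Fin.succAbove_lt_iff_castSucc_lt,
      (Fin.succAbove_ne i t).symm, if_false]
    split_ifs <;> rfl

end ContinuousMultilinearMap

namespace FormalMultilinearSeries

noncomputable def divSnd (p : FormalMultilinearSeries 𝕜 (E × 𝕜) F) :
    FormalMultilinearSeries 𝕜 (E × 𝕜) F :=
  fun m => (p (m + 1)).divSnd

lemma half_le_radius_divSnd (p : FormalMultilinearSeries 𝕜 (E × 𝕜) F) {r : NNReal}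
    (hr : r < p.radius) : ↑(r / 2) ≤ p.divSnd.radius := by
  obtain ⟨C, -, hC⟩ := p.norm_mul_pow_le_of_lt_radius hr
  rcases eq_or_ne r 0 with rfl | hr_ne
  · simp
  refine p.divSnd.le_radius_of_bound (C / r) fun m => ?_
  have h2m : ((m : ℝ) + 1) / 2 ^ m ≤ 1 := by
    rw [div_le_one (by positivity)]
    exact_mod_cast Nat.lt_two_pow_self
  calc ‖p.divSnd m‖ * ↑(r / 2) ^ m ≤ (m + 1) * ‖p (m + 1)‖ * (r / 2) ^ m := by
        gcongr
        exacts [(p (m + 1)).norm_divSnd_le, le_rfl]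
    _ = (m + 1) / 2 ^ m * (‖p (m + 1)‖ * r ^ (m + 1)) / r := by
        rw [div_pow]
        field_simp
        ring
    _ ≤ 1 * C / r := by gcongr; exact hC _
    _ = C / r := by rw [one_mul]

lemma radius_divSnd_pos {p : FormalMultilinearSeries 𝕜 (E × 𝕜) F} (hp : 0 < p.radius) :
    0 < p.divSnd.radius := by
  obtain ⟨r, hr0, hr⟩ := ENNReal.lt_iff_exists_nnreal_btwn.mp hp
  refine lt_of_lt_of_le ?_ (p.half_le_radius_divSnd hr)
  simpa using hr0.ne'

end FormalMultilinearSeries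

lemma iteratedDeriv_succ_id_smul_zero {n : ℕ} {g : 𝕜 → F} (hg : ContDiffAt 𝕜 (n + 1) g 0) :
    iteratedDeriv (n + 1) (fun w => w • g w) 0 = (n + 1 : 𝕜) • iteratedDeriv n g 0 := by
  have hleibniz := iteratedDerivWithin_smul (Set.mem_univ (0 : 𝕜)) uniqueDiffOn_univ
    (f := fun w : 𝕜 => w) contDiffAt_id.contDiffWithinAt hg.contDiffWithinAt
  simp only [iteratedDerivWithin_univ] at hleibniz
  rw [show (fun w => w • g w) = (fun w : 𝕜 => w) • g from rfl, hleibniz,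
    Finset.sum_range_succ', Finset.sum_range_succ']
  simp [iteratedDeriv_fun_id_zero, Finset.sum_eq_zero, ← Nat.cast_smul_eq_nsmul 𝕜]

section Division

variable [CompleteSpace F] {f g : E × 𝕜 → F} {z₀ : E}

lemma HasFPowerSeriesOnBall.eq_snd_smul_divSnd_sum {p : FormalMultilinearSeries 𝕜 (E × 𝕜) F}
    {r : ENNReal} (hf : HasFPowerSeriesOnBall f p (z₀, 0) r) {v : E × 𝕜}
    (hvr : v ∈ Metric.eball 0 r) (hvq : v ∈ Metric.eball 0 p.divSnd.radius)
    (hv0 : f (z₀ + v.1, 0) = 0) :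
    f ((z₀, 0) + v) = v.2 • p.divSnd.sum v := by
  have hπv : zeroSnd 𝕜 E v ∈ Metric.eball 0 r := by
    rw [Metric.mem_eball, edist_zero_right] at hvr ⊢
    refine lt_of_le_of_lt ?_ hvr
    rw [enorm_le_iff_norm_le]
    simpa using (zeroSnd 𝕜 E).le_of_opNorm_le norm_zeroSnd_le v
  have hπv0 : f ((z₀, 0) + zeroSnd 𝕜 E v) = 0 := by simpa using hv0
  have hdiff := (hf.hasSum hvr).sub (hf.hasSum hπv)
  rw [hπv0, sub_zero] at hdiff
  have h0 : p 0 (fun _ => v) = p 0 (fun _ => zeroSnd 𝕜 E v) :=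
    congrArg (p 0) (Subsingleton.elim _ _)
  have hshift := (hasSum_nat_add_iff
    (f := fun m => p m (fun _ => v) - p m (fun _ => zeroSnd 𝕜 E v)) 1).mpr
    (by rwa [Finset.sum_range_one, h0, sub_self, add_zero])
  simp only [(p _).map_sub_map_zeroSnd] at hshift
  exact hshift.unique ((p.divSnd.hasSum hvq).const_smul v.2)

theorem AnalyticAt.exists_eq_snd_smul (hf : AnalyticAt 𝕜 f (z₀, 0))
    (h0 : ∀ᶠ z in 𝓝 z₀, f (z, 0) = 0) :
    ∃ g : E × 𝕜 → F, AnalyticAt 𝕜 g (z₀, 0) ∧ ∀ᶠ x in 𝓝 (z₀, 0), f x = x.2 • g x := by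
  obtain ⟨p, r, hp⟩ := hf
  have hq := (p.divSnd.hasFPowerSeriesOnBall (p.radius_divSnd_pos
    (hp.r_pos.trans_le hp.r_le))).comp_sub (z₀, 0)
  rw [zero_add] at hq
  refine ⟨_, hq.analyticAt, ?_⟩
  have hball (ρ : ENNReal) (hρ : 0 < ρ) :
      ∀ᶠ x in 𝓝 (z₀, (0 : 𝕜)), x - (z₀, 0) ∈ Metric.eball 0 ρ := by
    filter_upwards [Metric.eball_mem_nhds _ hρ] with x hx
    simpa [Metric.mem_eball, edist_eq_enorm_sub] using hx
  filter_upwards [hball r hp.r_pos, hball _ hq.r_pos,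
    (continuous_fst.tendsto (z₀, (0 : 𝕜))).eventually h0] with x hxr hxq hx0
  simpa using hp.eq_snd_smul_divSnd_sum hxr hxq (by simpa using hx0)

lemma eventually_iteratedDeriv_succ_slice_eq (hg : AnalyticAt 𝕜 g (z₀, 0))
    (hfg : ∀ᶠ x in 𝓝 (z₀, 0), f x = x.2 • g x) (j : ℕ) :
    ∀ᶠ z in 𝓝 z₀, iteratedDeriv (j + 1) (fun w => f (z, w)) 0 =
      (j + 1 : 𝕜) • iteratedDeriv j (fun w => g (z, w)) 0 := by
  have h := hg.eventually_analyticAt.and hfg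
  rw [nhds_prod_eq] at h
  filter_upwards [h.curry] with z hz
  rw [Filter.EventuallyEq.iteratedDeriv_eq (j + 1) (hz.mono fun w hw => hw.2)]
  exact iteratedDeriv_succ_id_smul_zero
    (hz.self_of_nhds.1.comp (by fun_prop : AnalyticAt 𝕜 (fun w : 𝕜 => (z, w)) 0)).contDiffAt

theorem AnalyticAt.exists_eq_snd_pow_smul [CharZero 𝕜] (hf : AnalyticAt 𝕜 f (z₀, 0)) {k : ℕ}
    (hvanish : ∀ j < k, ∀ᶠ z in 𝓝 z₀, iteratedDeriv j (fun w => f (z, w)) 0 = 0) :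
    ∃ g : E × 𝕜 → F, AnalyticAt 𝕜 g (z₀, 0) ∧ ∀ᶠ x in 𝓝 (z₀, 0), f x = x.2 ^ k • g x := by
  induction k generalizing f with
  | zero => exact ⟨f, hf, by simp⟩
  | succ k ih =>
    obtain ⟨g₁, hg₁, hfg₁⟩ := hf.exists_eq_snd_smul (by simpa using hvanish 0 k.succ_pos)
    obtain ⟨g, hg, hg₁g⟩ := ih hg₁ fun j hj => by
      filter_upwards [hvanish (j + 1) (by omega),
        eventually_iteratedDeriv_succ_slice_eq hg₁ hfg₁ j] with z hz hzj
      rw [hzj] at hz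
      exact (smul_eq_zero.mp hz).resolve_left (by exact_mod_cast j.succ_ne_zero)
    refine ⟨g, hg, ?_⟩
    filter_upwards [hfg₁, hg₁g] with x h₁ h
    rw [h₁, h, smul_smul, pow_succ']

end Division

theorem analytic_eq_pow_mul_of_transversal_derivs_vanish_general
    (n k : ℕ)
    (U : Set ((Fin (n - 1) → ℂ) × ℂ)) (hUopen : IsOpen U)
    (hU0 : (0 : (Fin (n - 1) → ℂ) × ℂ) ∈ U)
    (φ : ((Fin (n - 1) → ℂ) × ℂ) → ℂ) (hφ : AnalyticOnNhd ℂ φ U)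
    (hvanish : ∃ U' ∈ nhds (0 : Fin (n - 1) → ℂ),
      ∀ j ≤ k - 1, ∀ z ∈ U', (z, (0 : ℂ)) ∈ U →
        iteratedDeriv j (fun w : ℂ => φ (z, w)) 0 = 0) :
    ∃ V ∈ nhds (0 : (Fin (n - 1) → ℂ) × ℂ),
      ∃ h : ((Fin (n - 1) → ℂ) × ℂ) → ℂ,
        AnalyticOnNhd ℂ h V ∧ ∀ p ∈ V, φ p = p.2 ^ k * h p := by
  obtain ⟨U', hU', hvanish⟩ := hvanish
  have hslice : ∀ᶠ z in 𝓝 (0 : Fin (n - 1) → ℂ), (z, (0 : ℂ)) ∈ U :=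
    ((continuous_id.prodMk continuous_const).tendsto 0).eventually (hUopen.mem_nhds hU0)
  obtain ⟨h, hh, hφh⟩ := (hφ 0 hU0).exists_eq_snd_pow_smul (z₀ := 0) (k := k) fun j hj => by
    filter_upwards [hU', hslice] with z hz hzU using hvanish j (by omega) z hz hzU
  exact ⟨_, hh.eventually_analyticAt.and hφh, h, fun x hx => hx.1, fun x hx => hx.2⟩

/-- The operators `1, ∂/∂w, …, ∂^{k-1}/∂w^{k-1}` form a defining set of Noetherian operators
for `(w^k) ⊂ O_{ℂⁿ,0}`: if all the transversal derivatives of order `≤ k-1` of an analytic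
function `φ` vanish on `{w = 0}` near `0`, then `φ = w^k · h` near `0` for some analytic `h`. -/
theorem analytic_eq_pow_mul_of_transversal_derivs_vanish
    (n k : ℕ) (hn : 1 ≤ n) (hk : 1 ≤ k)
    (U : Set ((Fin (n - 1) → ℂ) × ℂ)) (hUopen : IsOpen U)
    (hU0 : (0 : (Fin (n - 1) → ℂ) × ℂ) ∈ U)
    (φ : ((Fin (n - 1) → ℂ) × ℂ) → ℂ) (hφ : AnalyticOnNhd ℂ φ U)
    (hvanish : ∃ U' ∈ nhds (0 : Fin (n - 1) → ℂ),
      ∀ j ≤ k - 1, ∀ z ∈ U', (z, (0 : ℂ)) ∈ U →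
        iteratedDeriv j (fun w : ℂ => φ (z, w)) 0 = 0) :
    ∃ V ∈ nhds (0 : (Fin (n - 1) → ℂ) × ℂ),
      ∃ h : ((Fin (n - 1) → ℂ) × ℂ) → ℂ,
        AnalyticOnNhd ℂ h V ∧ ∀ p ∈ V, φ p = p.2 ^ k * h p :=
  analytic_eq_pow_mul_of_transversal_derivs_vanish_general n k U hUopen hU0 φ hφ hvanish
end
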